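/- Let n be a positive integer and I = (Fin n → Fin 2). Let φ : I × I → ℂ be a unit vector (∑ x, ‖φ x‖² = 1) and ρ_φ x y = φ x * conj (φ y). Then ∑ over all pairs (A, B) with A B : Fin n → Fin 4, A ≠ (fun _ => 0) and B ≠ (fun _ => 0), of ‖⟪φ, ((P A) ⊗ₖ (P B)) φ⟫‖² equals 2^(2n) − 2^n * (‖ptr₂ ρ_φ‖₂² + ‖ptr₁ ρ_φ‖₂²) + 1, where ‖·‖₂ is the Frobenius norm. Consequently this sum is at most 4^n − 1, and equality is attained for any φ with ptr₁ ρ_φ = (2^n)⁻¹ • 1 and ptr₂ ρ_φ = (2^n)⁻¹ • 1. -/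

import Mathlib

open Matrix BigOperators Kronecker

/-- The single-qubit Pauli matrices: σ₀ = 1, σ₁ = X, σ₂ = Y, σ₃ = Z. -/
noncomputable def pauli : Fin 4 → Matrix (Fin 2) (Fin 2) ℂ :=
  ![1, !![0, 1; 1, 0], !![0, -Complex.I; Complex.I, 0], !![1, 0; 0, -1]]

/-- The Pauli string associated to `A : ι → Fin 4`. -/
noncomputable def pauliString {ι : Type*} [Fintype ι] (A : ι → Fin 4) :
    Matrix (ι → Fin 2) (ι → Fin 2) ℂ :=
  Matrix.of fun x y => ∏ i, pauli (A i) (x i) (y i)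

/-- The quadratic form ⟪φ, M φ⟫ = ∑ x ∑ y, conj (φ x) · M x y · φ y. -/
noncomputable def qip {m : Type*} [Fintype m] (φ : m → ℂ) (M : Matrix m m ℂ) : ℂ :=
  ∑ x, ∑ y, (starRingEnd ℂ) (φ x) * M x y * φ y

/-- Partial trace over the second tensor factor. -/
noncomputable def ptr2 {s t : Type*} [Fintype t] (M : Matrix (s × t) (s × t) ℂ) :
    Matrix s s ℂ :=
  Matrix.of fun i j => ∑ k, M (i, k) (j, k)

/-- Partial trace over the first tensor factor. -/
noncomputable def ptr1 {s t : Type*} [Fintype s] (M : Matrix (s × t) (s × t) ℂ) :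
    Matrix t t ℂ :=
  Matrix.of fun k l => ∑ i, M (i, k) (i, l)

/-- The Frobenius (Hilbert–Schmidt) norm √Tr(Xᴴ X). -/
noncomputable def frobNorm {m : Type*} [Fintype m] (X : Matrix m m ℂ) : ℝ :=
  Real.sqrt ((Xᴴ * X).trace.re)

/-- The sum ∑_{A ≠ 0} ∑_{B ≠ 0} |⟪φ, (P A ⊗ P B) φ⟫|² over the Pauli sub-ensemble with
both halves nontrivial. -/
noncomputable def pauliSumBoth (n : ℕ) (φ : (Fin n → Fin 2) × (Fin n → Fin 2) → ℂ) : ℝ :=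
  ∑ A ∈ Finset.univ.filter (fun A : Fin n → Fin 4 => A ≠ fun _ => (0 : Fin 4)),
    ∑ B ∈ Finset.univ.filter (fun B : Fin n → Fin 4 => B ≠ fun _ => (0 : Fin 4)),
      ‖qip φ (pauliString A ⊗ₖ pauliString B)‖ ^ 2

/-! ### Auxiliary lemmas -/

lemma pauli_complete (x y x' y' : Fin 2) :
    ∑ a : Fin 4, pauli a x y * (starRingEnd ℂ) (pauli a x' y') =
      if x = x' ∧ y = y' then 2 else 0 := by
  fin_cases x <;> fin_cases y <;> fin_cases x' <;> fin_cases y' <;>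
    (simp [pauli, Fin.sum_univ_four, Matrix.one_apply, Complex.ext_iff] <;> norm_num)

lemma pauliString_zero {ι : Type*} [Fintype ι] [DecidableEq ι] :
    pauliString (fun _ : ι => (0 : Fin 4)) = 1 := by
  ext x y
  show (∏ i, pauli 0 (x i) (y i)) = _
  rcases eq_or_ne x y with h | h
  · subst h
    simp [pauli, Matrix.one_apply]
  · obtain ⟨i, hi⟩ := Function.ne_iff.mp h
    rw [Matrix.one_apply_ne h]
    exact Finset.prod_eq_zero (Finset.mem_univ i)
      (by simp [pauli, Matrix.one_apply, hi])

lemma pauliString_complete {ι : Type*} [Fintype ι] [DecidableEq ι]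
    (x y x' y' : ι → Fin 2) :
    ∑ A : ι → Fin 4, pauliString A x y * (starRingEnd ℂ) (pauliString A x' y') =
      if x = x' ∧ y = y' then (2 : ℂ) ^ Fintype.card ι else 0 := by
  have h1 : ∀ A : ι → Fin 4,
      pauliString A x y * (starRingEnd ℂ) (pauliString A x' y') =
        ∏ i, (pauli (A i) (x i) (y i) * (starRingEnd ℂ) (pauli (A i) (x' i) (y' i))) := by
    intro A
    simp [pauliString, map_prod, Finset.prod_mul_distrib]
  simp_rw [h1]
  rw [← Fintype.piFinset_univ, ← Finset.prod_univ_sum (fun _ => (Finset.univ : Finset (Fin 4)))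
    (fun i a => pauli a (x i) (y i) * (starRingEnd ℂ) (pauli a (x' i) (y' i)))]
  simp_rw [pauli_complete]
  by_cases h : x = x' ∧ y = y'
  · obtain ⟨h1, h2⟩ := h
    subst h1; subst h2
    simp [Finset.prod_const, Finset.card_univ]
  · rw [if_neg h]
    rcases not_and_or.mp h with h' | h'
    · obtain ⟨i, hi⟩ := Function.ne_iff.mp h'
      exact Finset.prod_eq_zero (Finset.mem_univ i) (if_neg fun hc => hi hc.1)
    · obtain ⟨i, hi⟩ := Function.ne_iff.mp h'
      exact Finset.prod_eq_zero (Finset.mem_univ i) (if_neg fun hc => hi hc.2)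

lemma frobNorm_sq {m : Type*} [Fintype m] (X : Matrix m m ℂ) :
    frobNorm X ^ 2 = ∑ i, ∑ j, Complex.normSq (X i j) := by
  have h : ((Xᴴ * X).trace).re = ∑ i, ∑ j, Complex.normSq (X i j) := by
    simp only [Matrix.trace, Matrix.diag_apply, Matrix.mul_apply,
      Matrix.conjTranspose_apply, Complex.re_sum]
    rw [Finset.sum_comm]
    congr 1; ext i; congr 1; ext j
    simp [Complex.mul_re, Complex.normSq_apply]
  rw [frobNorm, Real.sq_sqrt, h]
  rw [h]
  exact Finset.sum_nonneg fun i _ => Finset.sum_nonneg fun j _ => Complex.normSq_nonneg _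

/-- The master second-moment computation: if a family of matrices satisfies the
completeness relation with constant `c`, then the corresponding sum of squared
amplitudes collapses to a diagonal sum. -/
lemma master {m : Type*} [Fintype m] [DecidableEq m] {α : Type*} [Fintype α]
    (K : α → Matrix m m ℂ) (c : ℂ)
    (hK : ∀ x y x' y', (∑ a : α, K a x y * (starRingEnd ℂ) (K a x' y')) =
      if x = x' ∧ y = y' then c else 0)
    (T : m → m → ℂ) :
    ∑ a : α, ‖∑ x, ∑ y, T x y * K a x y‖ ^ 2 =
      (c * ∑ x, ∑ y, T x y * (starRingEnd ℂ) (T x y)).re := by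
  have hz : ∀ a : α, (‖∑ x, ∑ y, T x y * K a x y‖ : ℝ) ^ 2 =
      ((∑ p : m × m, T p.1 p.2 * K a p.1 p.2) *
        (starRingEnd ℂ) (∑ q : m × m, T q.1 q.2 * K a q.1 q.2)).re := by
    intro a
    rw [← Fintype.sum_prod_type']
    rw [Complex.mul_conj, Complex.sq_norm, Complex.ofReal_re]
  simp_rw [hz]
  rw [← Complex.re_sum]
  congr 1
  have expand : ∀ a : α,
      (∑ p : m × m, T p.1 p.2 * K a p.1 p.2) *
        (starRingEnd ℂ) (∑ q : m × m, T q.1 q.2 * K a q.1 q.2) =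
      ∑ p : m × m, ∑ q : m × m,
        (K a p.1 p.2 * (starRingEnd ℂ) (K a q.1 q.2)) *
          (T p.1 p.2 * (starRingEnd ℂ) (T q.1 q.2)) := by
    intro a
    rw [map_sum, Finset.sum_mul_sum]
    congr 1; ext p; congr 1; ext q
    rw [_root_.map_mul]; ring
  simp_rw [expand]
  rw [Finset.sum_comm]
  have swap2 : ∀ p : m × m, ∑ a : α, ∑ q : m × m,
      (K a p.1 p.2 * (starRingEnd ℂ) (K a q.1 q.2)) * (T p.1 p.2 * (starRingEnd ℂ) (T q.1 q.2)) =
      c * (T p.1 p.2 * (starRingEnd ℂ) (T p.1 p.2)) := by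
    intro p
    rw [Finset.sum_comm]
    have hq : ∀ q : m × m, ∑ a : α,
        (K a p.1 p.2 * (starRingEnd ℂ) (K a q.1 q.2)) * (T p.1 p.2 * (starRingEnd ℂ) (T q.1 q.2)) =
        (if p.1 = q.1 ∧ p.2 = q.2 then c else 0) * (T p.1 p.2 * (starRingEnd ℂ) (T q.1 q.2)) := by
      intro q
      rw [← Finset.sum_mul, hK]
    simp_rw [hq]
    rw [Finset.sum_eq_single p]
    · simp
    · intro q _ hq2
      rw [if_neg, zero_mul]
      intro hc
      exact hq2 (Prod.ext hc.1 hc.2).symm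
    · simp
  simp_rw [swap2]
  rw [Finset.mul_sum]
  simp_rw [Finset.mul_sum]
  exact Fintype.sum_prod_type' (f := fun a b => c * (T a b * (starRingEnd ℂ) (T a b)))

lemma kron_one_qip {s t : Type*} [Fintype s] [Fintype t] [DecidableEq s] [DecidableEq t]
    (φ : s × t → ℂ) (M : Matrix s s ℂ) :
    qip φ (M ⊗ₖ (1 : Matrix t t ℂ)) =
      ∑ u, ∑ v, (∑ k, (starRingEnd ℂ) (φ (u, k)) * φ (v, k)) * M u v := by
  unfold qip
  simp_rw [Fintype.sum_prod_type, Matrix.kroneckerMap_apply, Matrix.one_apply,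
    mul_ite, ite_mul, mul_one, mul_zero, zero_mul, Finset.sum_ite_eq, Finset.mem_univ,
    if_true, Finset.sum_mul]
  refine Finset.sum_congr rfl fun u _ => ?_
  rw [Finset.sum_comm]
  refine Finset.sum_congr rfl fun v _ => ?_
  refine Finset.sum_congr rfl fun k _ => ?_
  ring

lemma one_kron_qip {s t : Type*} [Fintype s] [Fintype t] [DecidableEq s] [DecidableEq t]
    (φ : s × t → ℂ) (M : Matrix t t ℂ) :
    qip φ ((1 : Matrix s s ℂ) ⊗ₖ M) =
      ∑ u, ∑ v, (∑ k, (starRingEnd ℂ) (φ (k, u)) * φ (k, v)) * M u v := by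
  have h := kron_one_qip (fun p : t × s => φ (p.2, p.1)) M
  rw [← h]
  unfold qip
  refine Fintype.sum_equiv (Equiv.prodComm s t) _ _ fun x => ?_
  refine Fintype.sum_equiv (Equiv.prodComm s t) _ _ fun y => ?_
  simp only [Matrix.kroneckerMap_apply, Equiv.prodComm_apply, Prod.swap, Prod.fst, Prod.snd]
  rcases x with ⟨x1, x2⟩; rcases y with ⟨y1, y2⟩
  simp only [Matrix.kroneckerMap_apply]
  ring

lemma qip_as_T {m : Type*} [Fintype m] (φ : m → ℂ) (M : Matrix m m ℂ) :
    qip φ M = ∑ x, ∑ y, ((starRingEnd ℂ) (φ x) * φ y) * M x y := by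
  unfold qip
  refine Finset.sum_congr rfl fun x _ => Finset.sum_congr rfl fun y _ => by ring

lemma one_le_card_mul_frobSq {m : Type*} [Fintype m] [DecidableEq m]
    (X : Matrix m m ℂ) (h : X.trace = 1) :
    1 ≤ (Fintype.card m : ℝ) * frobNorm X ^ 2 := by
  have h1 : (1 : ℝ) ≤ ∑ i, ‖X i i‖ := by
    have ht : ‖X.trace‖ = 1 := by rw [h]; simp
    calc (1 : ℝ) = ‖X.trace‖ := ht.symm
      _ ≤ ∑ i, ‖X i i‖ := by
          rw [Matrix.trace]
          exact norm_sum_le _ _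
  have h2 : (∑ i, ‖X i i‖) ^ 2 ≤ (Fintype.card m : ℝ) * ∑ i, ‖X i i‖ ^ 2 := by
    have := sq_sum_le_card_mul_sum_sq (s := (Finset.univ : Finset m))
      (f := fun i => ‖X i i‖)
    simpa [Finset.card_univ] using this
  have h3 : ∑ i, ‖X i i‖ ^ 2 ≤ frobNorm X ^ 2 := by
    rw [frobNorm_sq]
    refine Finset.sum_le_sum fun i _ => ?_
    calc ‖X i i‖ ^ 2 = Complex.normSq (X i i) := by
          rw [Complex.sq_norm]
      _ ≤ ∑ j, Complex.normSq (X i j) :=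
          Finset.single_le_sum (fun j _ => Complex.normSq_nonneg _) (Finset.mem_univ i)
  have hd : (0 : ℝ) ≤ (Fintype.card m : ℝ) := Nat.cast_nonneg _
  nlinarith [h1, h2, h3,
    Finset.sum_nonneg (fun i (_ : i ∈ (Finset.univ : Finset m)) => norm_nonneg (X i i))]

lemma frobSq_smul_one {m : Type*} [Fintype m] [DecidableEq m] (c : ℂ) :
    frobNorm (c • (1 : Matrix m m ℂ)) ^ 2 = (Fintype.card m : ℝ) * Complex.normSq c := by
  rw [frobNorm_sq]
  have h : ∀ i j : m, Complex.normSq ((c • (1 : Matrix m m ℂ)) i j) =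
      if i = j then Complex.normSq c else 0 := by
    intro i j
    by_cases h : i = j <;> simp [Matrix.smul_apply, Matrix.one_apply, h]
  simp_rw [h, Finset.sum_ite_eq, Finset.mem_univ, if_true, Finset.sum_const,
    Finset.card_univ, nsmul_eq_mul]

/-- the second-moment computation for the doubly-stochastic Pauli
sub-ensemble: the sum equals 2^{2n} − 2ⁿ(‖ptr₂ ρ_φ‖₂² + ‖ptr₁ ρ_φ‖₂²) + 1, is at most
4ⁿ − 1, with equality whenever both marginals of ρ_φ are maximally mixed. -/
theorem pauli_second_moment_doubly_stochastic
    (n : ℕ) (hn : 0 < n)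
    (φ : (Fin n → Fin 2) × (Fin n → Fin 2) → ℂ)
    (hφ : ∑ x, ‖φ x‖ ^ 2 = 1)
    (ρφ : Matrix ((Fin n → Fin 2) × (Fin n → Fin 2))
      ((Fin n → Fin 2) × (Fin n → Fin 2)) ℂ)
    (hρφ : ∀ x y, ρφ x y = φ x * (starRingEnd ℂ) (φ y)) :
    pauliSumBoth n φ
        = (2 : ℝ) ^ (2 * n)
            - (2 : ℝ) ^ n * (frobNorm (ptr2 ρφ) ^ 2 + frobNorm (ptr1 ρφ) ^ 2) + 1 ∧
      pauliSumBoth n φ ≤ (4 : ℝ) ^ n - 1 ∧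
      (ptr1 ρφ = ((2 : ℂ) ^ n)⁻¹ • 1 → ptr2 ρφ = ((2 : ℂ) ^ n)⁻¹ • 1 →
        pauliSumBoth n φ = (4 : ℝ) ^ n - 1) := by
  classical
  have hφ' : ∑ x : (Fin n → Fin 2) × (Fin n → Fin 2), Complex.normSq (φ x) = 1 := by
    have := hφ
    simp_rw [Complex.sq_norm] at this
    exact this
  -- the completeness relation for pairs of Pauli strings
  have hK2n : ∀ x y x' y' : (Fin n → Fin 2) × (Fin n → Fin 2),
      (∑ p : (Fin n → Fin 4) × (Fin n → Fin 4),
        (pauliString p.1 ⊗ₖ pauliString p.2) x y *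
          (starRingEnd ℂ) ((pauliString p.1 ⊗ₖ pauliString p.2) x' y')) =
      if x = x' ∧ y = y' then (2 : ℂ) ^ (2 * n) else 0 := by
    intro x y x' y'
    rw [Fintype.sum_prod_type]
    have h1 : ∀ A B : Fin n → Fin 4,
        (pauliString A ⊗ₖ pauliString B) x y *
          (starRingEnd ℂ) ((pauliString A ⊗ₖ pauliString B) x' y') =
        (pauliString A x.1 y.1 * (starRingEnd ℂ) (pauliString A x'.1 y'.1)) *
          (pauliString B x.2 y.2 * (starRingEnd ℂ) (pauliString B x'.2 y'.2)) := by
      intro A B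
      simp only [Matrix.kroneckerMap_apply, _root_.map_mul]
      ring
    simp_rw [h1]
    rw [← Finset.sum_mul_sum]
    rw [pauliString_complete, pauliString_complete]
    simp only [Fintype.card_fin]
    by_cases h : x = x' ∧ y = y'
    · obtain ⟨h1', h2'⟩ := h
      subst h1'; subst h2'
      rw [if_pos ⟨rfl, rfl⟩, if_pos ⟨rfl, rfl⟩, if_pos ⟨rfl, rfl⟩, two_mul, pow_add]
    · rw [if_neg h]
      have hor : ¬(x.1 = x'.1 ∧ y.1 = y'.1) ∨ ¬(x.2 = x'.2 ∧ y.2 = y'.2) := by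
        by_contra hc
        rw [not_or, not_not, not_not] at hc
        exact h ⟨Prod.ext hc.1.1 hc.2.1, Prod.ext hc.1.2 hc.2.2⟩
      rcases hor with h' | h'
      · rw [if_neg h', zero_mul]
      · rw [if_neg h', mul_zero]
  -- the full sum over all A, B
  have Hall : ∑ A : Fin n → Fin 4, ∑ B : Fin n → Fin 4,
      ‖qip φ (pauliString A ⊗ₖ pauliString B)‖ ^ 2 = (2 : ℝ) ^ (2 * n) := by
    have hsum : ∑ x : (Fin n → Fin 2) × (Fin n → Fin 2),
        ∑ y : (Fin n → Fin 2) × (Fin n → Fin 2),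
        ((starRingEnd ℂ) (φ x) * φ y) * (starRingEnd ℂ) ((starRingEnd ℂ) (φ x) * φ y)
        = 1 := by
      simp_rw [Complex.mul_conj, Complex.normSq_mul, Complex.normSq_conj,
        Complex.ofReal_mul]
      rw [← Finset.sum_mul_sum]
      have hc : ∑ x : (Fin n → Fin 2) × (Fin n → Fin 2),
          ((Complex.normSq (φ x) : ℂ)) = 1 := by
        rw [← Complex.ofReal_sum, hφ', Complex.ofReal_one]
      rw [hc, one_mul]
    have hm := master (fun p : (Fin n → Fin 4) × (Fin n → Fin 4) =>
        pauliString p.1 ⊗ₖ pauliString p.2) ((2 : ℂ) ^ (2 * n)) hK2n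
      (fun x y => (starRingEnd ℂ) (φ x) * φ y)
    rw [hsum, mul_one] at hm
    rw [Fintype.sum_prod_type] at hm
    simp_rw [qip_as_T]
    rw [hm]
    rw [show ((2 : ℂ) ^ (2 * n)) = (((2 : ℝ) ^ (2 * n) : ℝ) : ℂ) by push_cast; ring,
      Complex.ofReal_re]
  -- completeness for single Pauli strings
  have hK1 : ∀ x y x' y' : Fin n → Fin 2,
      (∑ A : Fin n → Fin 4, pauliString A x y * (starRingEnd ℂ) (pauliString A x' y')) =
        if x = x' ∧ y = y' then (2 : ℂ) ^ n else 0 := by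
    intro x y x' y'
    rw [pauliString_complete]
    simp [Fintype.card_fin]
  -- the B = 0 slice
  have HB : ∑ A : Fin n → Fin 4,
      ‖qip φ (pauliString A ⊗ₖ pauliString (fun _ : Fin n => (0 : Fin 4)))‖ ^ 2 =
      (2 : ℝ) ^ n * frobNorm (ptr2 ρφ) ^ 2 := by
    simp_rw [pauliString_zero]
    have hT : ∀ u v : Fin n → Fin 2,
        (∑ k, (starRingEnd ℂ) (φ (u, k)) * φ (v, k)) = ptr2 ρφ v u := by
      intro u v
      simp only [ptr2, Matrix.of_apply]
      refine Finset.sum_congr rfl fun k _ => ?_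
      rw [hρφ]; ring
    have hsum : ∑ u : Fin n → Fin 2, ∑ v : Fin n → Fin 2,
        (∑ k, (starRingEnd ℂ) (φ (u, k)) * φ (v, k)) *
          (starRingEnd ℂ) (∑ k, (starRingEnd ℂ) (φ (u, k)) * φ (v, k)) =
        ((frobNorm (ptr2 ρφ) ^ 2 : ℝ) : ℂ) := by
      simp_rw [hT, Complex.mul_conj]
      rw [frobNorm_sq, Finset.sum_comm]
      push_cast
      rfl
    have hm := master (fun A : Fin n → Fin 4 => pauliString A) ((2 : ℂ) ^ n) hK1
      (fun u v => ∑ k, (starRingEnd ℂ) (φ (u, k)) * φ (v, k))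
    rw [hsum] at hm
    simp_rw [kron_one_qip]
    rw [hm]
    rw [show (2 : ℂ) ^ n * ((frobNorm (ptr2 ρφ) ^ 2 : ℝ) : ℂ) =
      (((2 : ℝ) ^ n * frobNorm (ptr2 ρφ) ^ 2 : ℝ) : ℂ) by push_cast; ring,
      Complex.ofReal_re]
  -- the A = 0 slice
  have HA : ∑ B : Fin n → Fin 4,
      ‖qip φ (pauliString (fun _ : Fin n => (0 : Fin 4)) ⊗ₖ pauliString B)‖ ^ 2 =
      (2 : ℝ) ^ n * frobNorm (ptr1 ρφ) ^ 2 := by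
    simp_rw [pauliString_zero]
    have hT : ∀ u v : Fin n → Fin 2,
        (∑ k, (starRingEnd ℂ) (φ (k, u)) * φ (k, v)) = ptr1 ρφ v u := by
      intro u v
      simp only [ptr1, Matrix.of_apply]
      refine Finset.sum_congr rfl fun k _ => ?_
      rw [hρφ]; ring
    have hsum : ∑ u : Fin n → Fin 2, ∑ v : Fin n → Fin 2,
        (∑ k, (starRingEnd ℂ) (φ (k, u)) * φ (k, v)) *
          (starRingEnd ℂ) (∑ k, (starRingEnd ℂ) (φ (k, u)) * φ (k, v)) =
        ((frobNorm (ptr1 ρφ) ^ 2 : ℝ) : ℂ) := by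
      simp_rw [hT, Complex.mul_conj]
      rw [frobNorm_sq, Finset.sum_comm]
      push_cast
      rfl
    have hm := master (fun B : Fin n → Fin 4 => pauliString B) ((2 : ℂ) ^ n) hK1
      (fun u v => ∑ k, (starRingEnd ℂ) (φ (k, u)) * φ (k, v))
    rw [hsum] at hm
    simp_rw [one_kron_qip]
    rw [hm]
    rw [show (2 : ℂ) ^ n * ((frobNorm (ptr1 ρφ) ^ 2 : ℝ) : ℂ) =
      (((2 : ℝ) ^ n * frobNorm (ptr1 ρφ) ^ 2 : ℝ) : ℂ) by push_cast; ring,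
      Complex.ofReal_re]
  -- the (0,0) term
  have H00 : ‖qip φ (pauliString (fun _ : Fin n => (0 : Fin 4)) ⊗ₖ
      pauliString (fun _ : Fin n => (0 : Fin 4)))‖ ^ 2 = 1 := by
    simp_rw [pauliString_zero, Matrix.one_kronecker_one]
    have hq : qip φ (1 : Matrix ((Fin n → Fin 2) × (Fin n → Fin 2))
        ((Fin n → Fin 2) × (Fin n → Fin 2)) ℂ) = 1 := by
      unfold qip
      simp_rw [Matrix.one_apply, mul_ite, ite_mul, mul_one, mul_zero, zero_mul,
        Finset.sum_ite_eq, Finset.mem_univ, if_true]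
      simp_rw [← Complex.normSq_eq_conj_mul_self]
      rw [← Complex.ofReal_sum, hφ', Complex.ofReal_one]
    rw [hq]
    simp
  -- combine the four pieces
  have hfilter : (Finset.univ.filter (fun A : Fin n → Fin 4 => A ≠ fun _ => (0 : Fin 4)))
      = Finset.univ.erase (fun _ : Fin n => (0 : Fin 4)) := by
    ext A
    simp [Finset.mem_filter, Finset.mem_erase, and_comm]
  have key : pauliSumBoth n φ
      = (2 : ℝ) ^ (2 * n)
          - (2 : ℝ) ^ n * (frobNorm (ptr2 ρφ) ^ 2 + frobNorm (ptr1 ρφ) ^ 2) + 1 := by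
    unfold pauliSumBoth
    rw [hfilter]
    simp_rw [Finset.sum_erase_eq_sub (Finset.mem_univ (fun _ : Fin n => (0 : Fin 4)))]
    rw [Finset.sum_sub_distrib]
    rw [Hall, HB, HA, H00]
    ring
  refine ⟨key, ?_, ?_⟩
  · -- the inequality
    have hcard : (Fintype.card (Fin n → Fin 2) : ℝ) = (2 : ℝ) ^ n := by
      rw [Fintype.card_fun]
      push_cast
      simp
    have htr2 : (ptr2 ρφ).trace = 1 := by
      simp only [Matrix.trace, Matrix.diag_apply, ptr2, Matrix.of_apply, hρφ]
      rw [(Fintype.sum_prod_type (f := fun p : (Fin n → Fin 2) × (Fin n → Fin 2) =>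
        φ p * (starRingEnd ℂ) (φ p))).symm]
      simp_rw [Complex.mul_conj]
      rw [← Complex.ofReal_sum, hφ', Complex.ofReal_one]
    have htr1 : (ptr1 ρφ).trace = 1 := by
      simp only [Matrix.trace, Matrix.diag_apply, ptr1, Matrix.of_apply, hρφ]
      rw [(Fintype.sum_prod_type_right (f := fun p : (Fin n → Fin 2) × (Fin n → Fin 2) =>
        φ p * (starRingEnd ℂ) (φ p))).symm]
      simp_rw [Complex.mul_conj]
      rw [← Complex.ofReal_sum, hφ', Complex.ofReal_one]
    have e2 := one_le_card_mul_frobSq (ptr2 ρφ) htr2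
    have e1 := one_le_card_mul_frobSq (ptr1 ρφ) htr1
    rw [hcard] at e1 e2
    have h4 : (2 : ℝ) ^ (2 * n) = (4 : ℝ) ^ n := by
      rw [pow_mul]; norm_num
    rw [key, h4, mul_add]
    linarith
  · -- the equality case
    intro h1 h2
    have hcard : (Fintype.card (Fin n → Fin 2) : ℝ) = (2 : ℝ) ^ n := by
      rw [Fintype.card_fun]
      push_cast
      simp
    have hns : Complex.normSq (((2 : ℂ) ^ n)⁻¹) = (((2 : ℝ) ^ n)⁻¹) ^ 2 := by
      rw [map_inv₀, map_pow]
      norm_num [Complex.normSq_apply]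
      rw [← pow_mul, pow_mul']
      norm_num
    have hfs : ∀ X : Matrix (Fin n → Fin 2) (Fin n → Fin 2) ℂ,
        X = ((2 : ℂ) ^ n)⁻¹ • 1 → frobNorm X ^ 2 = ((2 : ℝ) ^ n)⁻¹ := by
      intro X hX
      rw [hX, frobSq_smul_one, hcard, hns]
      have hpos : (0 : ℝ) < (2 : ℝ) ^ n := by positivity
      field_simp
    rw [key, hfs _ h2, hfs _ h1]
    have h4 : (2 : ℝ) ^ (2 * n) = (4 : ℝ) ^ n := by
      rw [pow_mul]; norm_num
    have h2n : ((2 : ℝ) ^ n) ≠ 0 := by positivity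
    rw [h4, mul_add, mul_inv_cancel₀ h2n]
    ring
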